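/- arXiv:1702.07457 — 2 statements merged into one kernel-verified Lean document; each statement's English description precedes it below -/
import Mathlib

section
/- Let u ∈ ℚ \ {0, 1} and let g_u(x) = x^{-1}∏_{t=0}^∞ (1 + u x^{-2^t}) be viewed as a Laurent series over ℚ. Then g_u is not a rational function: g_u ∉ ℚ(x). -/
open Polynomial
open scoped Classical

noncomputable section

variable {F : Type*} [Field F] [CharZero F]

/-- The infinite product `∏_{t=0}^∞ P(T^{d^t})` (with `T = x⁻¹`), defined coefficientwise
via the stabilizing finite truncated products (valid when `P(0) = 1`). -/
def infProd (P : Polynomial F) (d : ℕ) : PowerSeries F :=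
  PowerSeries.mk fun n => (∏ t ∈ Finset.range (n + 1), P.comp (Polynomial.X ^ d ^ t)).coeff n

/-- The element `x = T⁻¹` of `F((T))`. -/
def xx : LaurentSeries F := ((PowerSeries.X : PowerSeries F) : LaurentSeries F)⁻¹

/-- Evaluation of a polynomial in the variable `x` inside `F((x⁻¹))`. -/
def pev (p : Polynomial F) : LaurentSeries F := Polynomial.aeval (xx : LaurentSeries F) p

/-- Degree valuation `‖f‖` on `F((x⁻¹))`, with `‖0‖ = ⊥`. -/
def degB (f : LaurentSeries F) : WithBot ℤ := if f = 0 then ⊥ else (-(f.order) : ℤ)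

/-- `g_u(x) = x⁻¹ ∏_{t=0}^∞ (1 + u x^{-2^t})`. -/
def gU (u : F) : LaurentSeries F :=
  (xx : LaurentSeries F)⁻¹ *
    ((infProd (1 + Polynomial.C u * Polynomial.X) 2 : PowerSeries F) : LaurentSeries F)

/-! With `T = x⁻¹` we have `g_u = T f` for the power series `f = ∏ₜ (1 + u T^(2^t))`, whose
`n`-th coefficient is `a n = u ^ s(n)`, `s` the binary digit sum. If `g_u q(x) = p(x)`, comparing
coefficients of positive powers of `T` shows that `c = X q` annihilates `a` under the shift
operator: `∑ᵢ cᵢ a (j + i) = 0` for every `j`. Since `a (2n) = a n` and `a (2n+1) = u a n`,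
writing `c = e(X²) + X o(X²)` turns an annihilator `c` into the two annihilators `e + u o` and
`u e + X o` of about half the degree, which vanish together only if `c = 0`. Descending, some
nonzero annihilator has degree at most one, and its values at `j = 0, 1` force it to vanish once
`u ∉ {0, 1}`. -/

theorem Nat.digits_two_sum_two_mul (n : ℕ) :
    (Nat.digits 2 (2 * n)).sum = (Nat.digits 2 n).sum := by
  rcases Nat.eq_zero_or_pos n with rfl | hn
  · rfl
  · rw [Nat.digits_def' one_lt_two (by omega), Nat.mul_mod_right,
      Nat.mul_div_cancel_left _ two_pos, List.sum_cons, zero_add]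

theorem Nat.digits_two_sum_two_mul_add_one (n : ℕ) :
    (Nat.digits 2 (2 * n + 1)).sum = (Nat.digits 2 n).sum + 1 := by
  rw [Nat.digits_def' one_lt_two (by omega), List.sum_cons, add_comm]
  congr 3 <;> omega

namespace Polynomial

variable {R : Type*} [CommSemiring R]

def evalShift (c : R[X]) (a : ℕ → R) (j : ℕ) : R := c.sum fun i r => r * a (j + i)

variable {a : ℕ → R} {j : ℕ} {u : R}

theorem evalShift_add (c d : R[X]) :
    (c + d).evalShift a j = c.evalShift a j + d.evalShift a j :=
  sum_add_index _ _ _ (fun _ => zero_mul _) fun _ _ _ => add_mul _ _ _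

@[simp]
theorem evalShift_monomial (i : ℕ) (r : R) : (monomial i r).evalShift a j = r * a (j + i) :=
  sum_monomial_index _ _ (zero_mul _)

theorem evalShift_C_mul (r : R) (c : R[X]) :
    (C r * c).evalShift a j = r * c.evalShift a j := by
  induction c using Polynomial.induction_on' with
  | add c d hc hd => rw [mul_add, evalShift_add, evalShift_add, hc, hd, mul_add]
  | monomial i s => rw [C_mul_monomial, evalShift_monomial, evalShift_monomial, mul_assoc]

theorem evalShift_X_mul (c : R[X]) : (X * c).evalShift a j = c.evalShift a (j + 1) := by
  induction c using Polynomial.induction_on' with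
  | add c d hc hd => rw [mul_add, evalShift_add, evalShift_add, hc, hd]
  | monomial i s =>
    rw [X_mul_monomial, evalShift_monomial, evalShift_monomial, add_right_comm, add_assoc]

theorem evalShift_expand_two_even (ha₀ : ∀ n, a (2 * n) = a n) (e : R[X]) (r : ℕ) :
    (expand R 2 e).evalShift a (2 * r) = e.evalShift a r := by
  induction e using Polynomial.induction_on' with
  | add c d hc hd => rw [map_add, evalShift_add, evalShift_add, hc, hd]
  | monomial i s =>
    rw [expand_monomial, evalShift_monomial, evalShift_monomial, mul_comm i, ← mul_add, ha₀]

theorem evalShift_expand_two_odd (ha₁ : ∀ n, a (2 * n + 1) = u * a n) (e : R[X]) (r : ℕ) :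
    (expand R 2 e).evalShift a (2 * r + 1) = u * e.evalShift a r := by
  induction e using Polynomial.induction_on' with
  | add c d hc hd => rw [map_add, evalShift_add, evalShift_add, hc, hd, mul_add]
  | monomial i s =>
    rw [expand_monomial, evalShift_monomial, evalShift_monomial, add_right_comm, mul_comm i,
      ← mul_add, ha₁, mul_left_comm]

theorem evalShift_expand_two_add_even (ha₀ : ∀ n, a (2 * n) = a n)
    (ha₁ : ∀ n, a (2 * n + 1) = u * a n) (e o : R[X]) (r : ℕ) :
    (expand R 2 e + X * expand R 2 o).evalShift a (2 * r) = (e + C u * o).evalShift a r := by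
  rw [evalShift_add, evalShift_add, evalShift_X_mul, evalShift_C_mul,
    evalShift_expand_two_even ha₀, evalShift_expand_two_odd ha₁]

theorem evalShift_expand_two_add_odd (ha₀ : ∀ n, a (2 * n) = a n)
    (ha₁ : ∀ n, a (2 * n + 1) = u * a n) (e o : R[X]) (r : ℕ) :
    (expand R 2 e + X * expand R 2 o).evalShift a (2 * r + 1) =
      (C u * e + X * o).evalShift a r := by
  rw [evalShift_add, evalShift_add, evalShift_X_mul, evalShift_C_mul, evalShift_X_mul,
    evalShift_expand_two_odd ha₁, show 2 * r + 1 + 1 = 2 * (r + 1) by ring,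
    evalShift_expand_two_even ha₀]

theorem expand_contract_two_add_X_mul (c : R[X]) :
    expand R 2 (contract 2 c) + X * expand R 2 (contract 2 c.divX) = c := by
  ext n
  obtain ⟨k, rfl | rfl⟩ := Nat.even_or_odd' n
  · have hX : (X * expand R 2 (contract 2 c.divX)).coeff (2 * k) = 0 := by
      rcases k with _ | k
      · exact coeff_X_mul_zero _
      · rw [show 2 * (k + 1) = 2 * k + 1 + 1 by ring, coeff_X_mul, coeff_expand two_pos,
          if_neg (by omega)]
    rw [coeff_add, hX, add_zero, coeff_expand_mul' two_pos, coeff_contract two_ne_zero, mul_comm]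
  · rw [coeff_add, coeff_X_mul, coeff_expand two_pos, if_neg (by omega), zero_add,
      coeff_expand_mul' two_pos, coeff_contract two_ne_zero, coeff_divX, mul_comm]

theorem natDegree_contract_le {p : ℕ} (hp : p ≠ 0) (c : R[X]) :
    (contract p c).natDegree ≤ c.natDegree / p :=
  natDegree_le_iff_coeff_eq_zero.2 fun n hn => by
    rw [coeff_contract hp]
    exact coeff_eq_zero_of_natDegree_lt
      ((Nat.div_lt_iff_lt_mul (Nat.pos_of_ne_zero hp)).1 (by exact_mod_cast hn))

theorem coeff_one_add_C_mul_X_mul_expand_two_two_mul (u : R) (p : R[X]) (k : ℕ) :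
    ((1 + C u * X) * expand R 2 p).coeff (2 * k) = p.coeff k := by
  have hodd : (X * expand R 2 p).coeff (2 * k) = 0 := by
    rcases k with _ | k
    · exact coeff_X_mul_zero _
    · rw [show 2 * (k + 1) = 2 * k + 1 + 1 by ring, coeff_X_mul, coeff_expand two_pos,
        if_neg (by omega)]
  rw [add_mul, one_mul, mul_assoc, coeff_add, coeff_C_mul, hodd, mul_zero, add_zero,
    coeff_expand_mul' two_pos]

theorem coeff_one_add_C_mul_X_mul_expand_two_two_mul_add_one (u : R) (p : R[X]) (k : ℕ) :
    ((1 + C u * X) * expand R 2 p).coeff (2 * k + 1) = u * p.coeff k := by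
  rw [add_mul, one_mul, mul_assoc, coeff_add, coeff_C_mul, coeff_X_mul,
    coeff_expand_mul' two_pos, coeff_expand two_pos, if_neg (by omega), zero_add]

theorem coeff_prod_one_add_C_mul_X_pow_two_pow (u : R) (m n : ℕ) :
    (∏ t ∈ Finset.range m, (1 + C u * X ^ 2 ^ t)).coeff n =
      if n < 2 ^ m then u ^ (Nat.digits 2 n).sum else 0 := by
  induction m generalizing n with
  | zero => rcases n with _ | n <;> simp [coeff_one]
  | succ m ih =>
    have hstep : ∏ t ∈ Finset.range (m + 1), (1 + C u * X ^ 2 ^ t) =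
        (1 + C u * X) * expand R 2 (∏ t ∈ Finset.range m, (1 + C u * X ^ 2 ^ t)) := by
      rw [Finset.prod_range_succ', mul_comm, map_prod, pow_zero, pow_one]
      simp only [map_add, map_one, map_mul, expand_C, map_pow, expand_X, ← pow_mul, Nat.pow_succ']
    obtain ⟨k, rfl | rfl⟩ := Nat.even_or_odd' n
    · rw [hstep, coeff_one_add_C_mul_X_mul_expand_two_two_mul, ih, Nat.digits_two_sum_two_mul]
      simp only [pow_succ', Nat.mul_lt_mul_left two_pos]
    · rw [hstep, coeff_one_add_C_mul_X_mul_expand_two_two_mul_add_one, ih,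
        Nat.digits_two_sum_two_mul_add_one, pow_succ']
      split_ifs <;> first | omega | ring

section Domain

variable {R : Type*} [CommRing R] [IsDomain R] {u : R} {a : ℕ → R}

theorem eq_zero_of_natDegree_le_one_of_evalShift_eq_zero (hu₀ : u ≠ 0) (hu₁ : u ≠ 1)
    (ha₀ : ∀ n, a (2 * n) = a n) (ha₁ : ∀ n, a (2 * n + 1) = u * a n) (ha : a 0 ≠ 0)
    {c : R[X]} (hc : c.natDegree ≤ 1) (hca : c.evalShift a = 0) : c = 0 := by
  have hval : ∀ j, c.evalShift a j = c.coeff 1 * a (j + 1) + c.coeff 0 * a j := fun j => by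
    conv_lhs => rw [eq_X_add_C_of_natDegree_le_one hc]
    rw [evalShift_add, C_mul_X_eq_monomial, ← monomial_zero_left, evalShift_monomial,
      evalShift_monomial, add_zero]
  have h₀ := hval 0
  have h₁ := hval 1
  have ha1 : a 1 = u * a 0 := ha₁ 0
  have ha2 : a 2 = u * a 0 := by rw [← ha1]; exact ha₀ 1
  rw [hca, Pi.zero_apply, zero_add, ha1] at h₀
  rw [hca, Pi.zero_apply, ha1, show 1 + 1 = 2 from rfl, ha2] at h₁
  have hc₀ : c.coeff 0 = 0 := by
    have : c.coeff 0 * a 0 * (u - 1) = 0 := by linear_combination h₀ - h₁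
    simpa [ha, sub_ne_zero.2 hu₁] using this
  have hc₁ : c.coeff 1 = 0 := by
    rw [hc₀, zero_mul, add_zero] at h₀
    simpa [ha, hu₀] using h₀.symm
  rw [eq_X_add_C_of_natDegree_le_one hc, hc₀, hc₁, map_zero, zero_mul, add_zero]

theorem exists_natDegree_le_one_evalShift_eq_zero (ha₀ : ∀ n, a (2 * n) = a n)
    (ha₁ : ∀ n, a (2 * n + 1) = u * a n) {c : R[X]} (hc : c ≠ 0) (hca : c.evalShift a = 0) :
    ∃ c' : R[X], c' ≠ 0 ∧ c'.natDegree ≤ 1 ∧ c'.evalShift a = 0 := by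
  induction hd : c.natDegree using Nat.strong_induction_on generalizing c with
  | _ d ih =>
  rcases le_or_gt d 1 with hd1 | hd1
  · exact ⟨c, hc, hd ▸ hd1, hca⟩
  set e := contract 2 c
  set o := contract 2 c.divX
  have hsplit : expand R 2 e + X * expand R 2 o = c := expand_contract_two_add_X_mul c
  have he : e.natDegree ≤ d / 2 := hd ▸ natDegree_contract_le two_ne_zero c
  have ho : o.natDegree ≤ (d - 1) / 2 := by
    rw [← hd, ← natDegree_divX_eq_natDegree_tsub_one]
    exact natDegree_contract_le two_ne_zero _
  by_cases hE : e + C u * o = 0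
  · have hO : C u * e + X * o ≠ 0 := by
      intro hO
      have ho0 : o = 0 := by
        have : (X - C (u ^ 2)) * o = 0 := by
          rw [← hO, eq_neg_of_add_eq_zero_left hE, map_pow]
          ring
        exact (mul_eq_zero.1 this).resolve_left (X_sub_C_ne_zero _)
      have he0 : e = 0 := by rwa [ho0, mul_zero, add_zero] at hE
      exact hc (by rw [← hsplit, he0, ho0, map_zero, mul_zero, add_zero])
    refine ih _ ?_ hO ?_ rfl
    · calc (C u * e + X * o).natDegree
          ≤ max (C u * e).natDegree (X * o).natDegree := natDegree_add_le _ _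
        _ ≤ max e.natDegree (o.natDegree + 1) :=
          max_le_max (natDegree_C_mul_le _ _) ((natDegree_mul_le).trans (by
            rw [add_comm]; exact Nat.add_le_add_left natDegree_X_le _))
        _ < d := by omega
    · ext r
      rw [← evalShift_expand_two_add_odd ha₀ ha₁, hsplit, hca]; rfl
  · refine ih _ ?_ hE ?_ rfl
    · calc (e + C u * o).natDegree
          ≤ max e.natDegree (C u * o).natDegree := natDegree_add_le _ _
        _ ≤ max e.natDegree o.natDegree := max_le_max le_rfl (natDegree_C_mul_le _ _)
        _ < d := by omega
    · ext r
      rw [← evalShift_expand_two_add_even ha₀ ha₁, hsplit, hca]; rfl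

theorem evalShift_ne_zero (hu₀ : u ≠ 0) (hu₁ : u ≠ 1) (ha₀ : ∀ n, a (2 * n) = a n)
    (ha₁ : ∀ n, a (2 * n + 1) = u * a n) (ha : a 0 ≠ 0) {c : R[X]} (hc : c ≠ 0) :
    c.evalShift a ≠ 0 := fun hca =>
  let ⟨_, hc', hdeg, hca'⟩ := exists_natDegree_le_one_evalShift_eq_zero ha₀ ha₁ hc hca
  hc' (eq_zero_of_natDegree_le_one_of_evalShift_eq_zero hu₀ hu₁ ha₀ ha₁ ha hdeg hca')

end Domain

end Polynomial

section LaurentSeries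

variable {K : Type*} [Field K]

theorem coeff_infProd_one_add_C_mul_X (u : K) (n : ℕ) :
    PowerSeries.coeff n (infProd (1 + C u * X) 2) = u ^ (Nat.digits 2 n).sum := by
  rw [infProd, PowerSeries.coeff_mk]
  simp only [add_comp, one_comp, mul_comp, C_comp, X_comp]
  rw [coeff_prod_one_add_C_mul_X_pow_two_pow,
    if_pos (Nat.lt_two_pow_self.trans_le (Nat.pow_le_pow_right two_pos n.le_succ))]

theorem xx_eq_single : (xx : LaurentSeries K) = HahnSeries.single (-1) 1 := by
  rw [xx, HahnSeries.ofPowerSeries_X, HahnSeries.inv_single, inv_one]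

theorem pev_monomial (i : ℕ) (r : K) : pev (monomial i r) = HahnSeries.single (-(i : ℤ)) r := by
  rw [pev, aeval_monomial, xx_eq_single, HahnSeries.single_pow, one_pow,
    HahnSeries.algebraMap_apply', PowerSeries.algebraMap_eq, HahnSeries.ofPowerSeries_C,
    HahnSeries.C_apply, HahnSeries.single_mul_single, zero_add, mul_one, nsmul_eq_mul, mul_neg_one]

theorem pev_X_mul (p : K[X]) : pev (X * p) = xx * pev p := by
  rw [pev, pev, map_mul, aeval_X]

theorem coeff_ofPowerSeries_mul_pev (f : PowerSeries K) (c : K[X]) (j : ℕ) :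
    (HahnSeries.ofPowerSeries ℤ K f * pev c).coeff (j : ℤ) =
      c.evalShift (fun n => PowerSeries.coeff n f) j := by
  induction c using Polynomial.induction_on' with
  | add c d hc hd =>
    rw [pev, map_add, mul_add, HahnSeries.coeff_add, ← pev, ← pev, hc, hd, evalShift_add]
  | monomial i r =>
    rw [pev_monomial, evalShift_monomial,
      show (j : ℤ) = ((j + i : ℕ) : ℤ) + -(i : ℤ) by push_cast; ring,
      HahnSeries.coeff_mul_single_add, HahnSeries.ofPowerSeries_apply_coeff, mul_comm]

theorem coeff_pev_natCast_add_one (p : K[X]) (j : ℕ) :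
    (pev p).coeff ((j + 1 : ℕ) : ℤ) = 0 := by
  induction p using Polynomial.induction_on' with
  | add p q hp hq => rw [pev, map_add, HahnSeries.coeff_add, ← pev, ← pev, hp, hq, add_zero]
  | monomial i r => rw [pev_monomial, HahnSeries.coeff_single_of_ne (by omega)]

end LaurentSeries

/-- For `u ∈ ℚ \ {0, 1}`, the Laurent series
`g_u(x) = x⁻¹∏_{t≥0}(1 + u x^{-2^t})` is not a rational function. -/
theorem gU_not_rational (u : ℚ) (h0 : u ≠ 0) (h1 : u ≠ 1) :
    ¬ ∃ p q : Polynomial ℚ, q ≠ 0 ∧ gU u * pev q = pev p := by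
  rintro ⟨p, q, hq, h⟩
  set f := infProd (1 + C u * X) 2
  have hxx : (xx : LaurentSeries ℚ) ≠ 0 := by
    rw [xx_eq_single]
    exact HahnSeries.single_ne_zero one_ne_zero
  have hf : HahnSeries.ofPowerSeries ℤ ℚ f * pev q = pev (X * p) := by
    rw [pev_X_mul, ← h, gU, mul_assoc, mul_inv_cancel_left₀ hxx]
  have hann : (X * q).evalShift (fun n => PowerSeries.coeff n f) = 0 := by
    ext j
    rw [evalShift_X_mul, ← coeff_ofPowerSeries_mul_pev, hf, coeff_pev_natCast_add_one]
    rfl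
  refine evalShift_ne_zero h0 h1 (fun n => ?_) (fun n => ?_) ?_ (mul_ne_zero X_ne_zero hq) hann
  · simp only [f, coeff_infProd_one_add_C_mul_X, Nat.digits_two_sum_two_mul]
  · simp only [f, coeff_infProd_one_add_C_mul_X, Nat.digits_two_sum_two_mul_add_one, pow_succ']
  · simp [f, coeff_infProd_one_add_C_mul_X]
end
end

section
/- Let F be a field, d ≥ 2, and let g ∈ F((x^{-1})) satisfy P*(x) g(x^d) = g(x) with P* monic of degree d-1, and suppose g is badly approximable so that all partial quotients are linear: g = K_{i=1}^∞ β_i/(x + α_i). Then for every k ≥ 0 the continuant identity K^1_d(a_{dk+1},...,a_{d(k+1)}; β_{dk+1},...,β_{d(k+1)}) = β_{dk+1} P*(x) holds, where a_i(x) = x + α_i. -/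
/-!
Write `p_n/q_n` for the convergents of `g`. Since `g` is badly approximable, any `p/q` with
`deg q ≤ n` and `deg (q g - p) < -n` equals `p_n/q_n`. Substituting `x ↦ x^d` into such an
approximation of level `k` and multiplying by `P*` gives, through `P* g(x^d) = g`, one of
level `dk`; hence `q_{dk} = q_k(x^d)` and `p_{dk} = P* p_k(x^d)`. Splitting the recursion at
`dk` gives `p_{d(k+1)} = K⁰_d p_{dk} + K¹_d p_{dk-1}`, so `P*` divides `K¹_d p_{dk-1}`; as
`p_{dk-1}` is coprime to `p_{dk}`, `P*` divides `K¹_d = β_{dk+1} K_{d-1}(a_{dk+2}, …)`, whose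
second factor is monic of degree `d - 1` like `P*`.
-/

open Polynomial
open scoped Classical

noncomputable section

variable {F : Type*} [Field F]

/-- Substitution `x ↦ x^d` (equivalently `T ↦ T^d`) on Laurent series. -/
def lsubst (d : ℕ) (f : LaurentSeries F) : LaurentSeries F :=
  if h : 0 < d then
    HahnSeries.embDomain
      (OrderEmbedding.ofStrictMono (fun n : ℤ => (d : ℤ) * n)
        (fun _ _ hab => mul_lt_mul_of_pos_left hab (by exact_mod_cast h))) f
  else 0

/-- Generalized continuants: `contK i₋₁ i₀ a b (n+1) = K_n(a_1,…,a_n; b_1,…,b_n)`. -/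
def contK (iₘ i₀ : Polynomial F) (a : ℕ → Polynomial F) (b : ℕ → F) : ℕ → Polynomial F
  | 0 => iₘ
  | 1 => i₀
  | n + 2 => a (n + 1) * contK iₘ i₀ a b (n + 1) + Polynomial.C (b (n + 1)) * contK iₘ i₀ a b n

/-- Numerators of the modified continued fraction `K β_i/(x+α_i)`, shifted:
`cfPab α β (n+1) = p_n`, with `p_{-1} = 1`, `p_0 = 0`. -/
def cfPab (α β : ℕ → F) : ℕ → Polynomial F
  | 0 => 1
  | 1 => 0
  | n + 2 => (Polynomial.X + Polynomial.C (α (n + 1))) * cfPab α β (n + 1) +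
      Polynomial.C (β (n + 1)) * cfPab α β n

/-- Denominators of the modified continued fraction, shifted: `cfQab α β (n+1) = q_n`. -/
def cfQab (α β : ℕ → F) : ℕ → Polynomial F
  | 0 => 0
  | 1 => 1
  | n + 2 => (Polynomial.X + Polynomial.C (α (n + 1))) * cfQab α β (n + 1) +
      Polynomial.C (β (n + 1)) * cfQab α β n

lemma algebraMap_laurentSeries (c : F) :
    algebraMap F (LaurentSeries F) c = HahnSeries.single 0 c := by
  simp [HahnSeries.algebraMap_apply']

lemma xx_eq : (xx : LaurentSeries F) = HahnSeries.single (-1 : ℤ) 1 := by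
  rw [xx, HahnSeries.ofPowerSeries_X]
  refine inv_eq_of_mul_eq_one_right ?_
  rw [HahnSeries.single_mul_single, one_mul]
  norm_num

lemma xx_pow (n : ℕ) : (xx : LaurentSeries F) ^ n = HahnSeries.single (-(n : ℤ)) 1 := by
  rw [xx_eq, HahnSeries.single_pow, one_pow, nsmul_eq_mul, mul_neg_one]

lemma pev_coeff_neg (p : F[X]) (j : ℕ) : (pev p).coeff (-(j : ℤ)) = p.coeff j := by
  have hterm (i : ℕ) : algebraMap F (LaurentSeries F) (p.coeff i) * xx ^ i =
      HahnSeries.single (-(i : ℤ)) (p.coeff i) := by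
    rw [xx_pow, algebraMap_laurentSeries, HahnSeries.single_mul_single, zero_add, mul_one]
  rw [pev, aeval_def, eval₂_eq_sum_range, HahnSeries.coeff_sum]
  simp only [hterm, HahnSeries.coeff_single, neg_inj, Nat.cast_inj]
  rw [Finset.sum_ite_eq]
  split_ifs with hj
  · rfl
  · exact (coeff_eq_zero_of_natDegree_lt (by simpa using hj)).symm

def lsubstRingHom (d : ℕ) (hd : 0 < d) : LaurentSeries F →+* LaurentSeries F :=
  HahnSeries.embDomainRingHom (AddMonoidHom.mulLeft (d : ℤ))
    (mul_right_injective₀ (by exact_mod_cast hd.ne'))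
    (fun _ _ => mul_le_mul_iff_right₀ (by exact_mod_cast hd))

lemma lsubst_eq_lsubstRingHom {d : ℕ} (hd : 0 < d) (f : LaurentSeries F) :
    lsubst d f = lsubstRingHom d hd f := by
  rw [lsubst, dif_pos hd]
  rfl

lemma lsubstRingHom_single {d : ℕ} (hd : 0 < d) (a : ℤ) (r : F) :
    lsubstRingHom d hd (HahnSeries.single a r) = HahnSeries.single ((d : ℤ) * a) r :=
  HahnSeries.embDomain_single

lemma lsubstRingHom_pev {d : ℕ} (hd : 0 < d) (p : F[X]) :
    lsubstRingHom d hd (pev p) = pev (p.comp (X ^ d)) := by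
  have hconst : (lsubstRingHom d hd).comp (algebraMap F (LaurentSeries F)) =
      algebraMap F (LaurentSeries F) := by
    ext1 c
    simp only [RingHom.comp_apply, algebraMap_laurentSeries, lsubstRingHom_single, mul_zero]
  have hxx : lsubstRingHom d hd xx = (xx : LaurentSeries F) ^ d := by
    rw [xx_eq, lsubstRingHom_single, ← xx_eq, xx_pow, mul_neg_one]
  rw [pev, pev, aeval_comp, aeval_X_pow, aeval_def, hom_eval₂, hconst, hxx, aeval_def]

lemma degB_le_iff {f : LaurentSeries F} {c : ℤ} :
    degB f ≤ (c : WithBot ℤ) ↔ ∀ n < -c, f.coeff n = 0 := by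
  unfold degB
  split_ifs with hf
  · simp [hf]
  · rw [WithBot.coe_le_coe, neg_le]
    refine ⟨fun h n hn => HahnSeries.coeff_eq_zero_of_lt_order (by omega), fun h => ?_⟩
    by_contra! hlt
    exact hf (HahnSeries.coeff_order_eq_zero.1 (h _ hlt))

lemma degB_sub_le {f g : LaurentSeries F} {c : ℤ} (hf : degB f ≤ (c : WithBot ℤ))
    (hg : degB g ≤ (c : WithBot ℤ)) : degB (f - g) ≤ (c : WithBot ℤ) :=
  degB_le_iff.2 fun n hn => by
    rw [HahnSeries.coeff_sub, degB_le_iff.1 hf n hn, degB_le_iff.1 hg n hn, sub_zero]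

lemma degB_mul_le {f g : LaurentSeries F} {a b : ℤ} (hf : degB f ≤ (a : WithBot ℤ))
    (hg : degB g ≤ (b : WithBot ℤ)) : degB (f * g) ≤ ((a + b : ℤ) : WithBot ℤ) := by
  by_cases h : f = 0 ∨ g = 0
  · rcases h with rfl | rfl <;> simp [degB]
  push Not at h
  simp only [degB, if_neg h.1, if_neg h.2, mul_ne_zero h.1 h.2, if_false,
    HahnSeries.order_mul h.1 h.2, WithBot.coe_le_coe] at hf hg ⊢
  omega

lemma degB_pev_le (p : F[X]) : degB (pev p) ≤ ((p.natDegree : ℤ) : WithBot ℤ) := by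
  refine degB_le_iff.2 fun n hn => ?_
  obtain ⟨j, rfl⟩ : ∃ j : ℕ, n = -(j : ℤ) := ⟨(-n).toNat, by omega⟩
  rw [pev_coeff_neg]
  exact coeff_eq_zero_of_natDegree_lt (by omega)

lemma eq_zero_of_degB_pev_le_neg_one {p : F[X]} (h : degB (pev p) ≤ ((-1 : ℤ) : WithBot ℤ)) :
    p = 0 := by
  have hlead := degB_le_iff.1 h (-(p.natDegree : ℤ)) (by omega)
  rwa [pev_coeff_neg, coeff_natDegree, leadingCoeff_eq_zero] at hlead

lemma pev_ne_zero {p : F[X]} (hp : p ≠ 0) : pev p ≠ 0 := fun h =>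
  hp (eq_zero_of_degB_pev_le_neg_one (by simp [h, degB]))

lemma pev_mul (p q : F[X]) : pev (p * q) = pev p * pev q := map_mul _ p q

lemma pev_sub (p q : F[X]) : pev (p - q) = pev p - pev q := map_sub _ p q

lemma degB_lsubst_le {d : ℕ} (hd : 0 < d) {f : LaurentSeries F} {c : ℤ}
    (hf : degB f ≤ (c : WithBot ℤ)) :
    degB (lsubst d f) ≤ (((d : ℤ) * c : ℤ) : WithBot ℤ) := by
  refine degB_le_iff.2 fun m hm => ?_
  rw [lsubst, dif_pos hd]
  by_cases hrange : ∃ n : ℤ, (d : ℤ) * n = m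
  · obtain ⟨n, rfl⟩ := hrange
    have hd' : (0 : ℤ) < d := by exact_mod_cast hd
    exact HahnSeries.embDomain_coeff.trans (degB_le_iff.1 hf n (by nlinarith))
  · exact HahnSeries.embDomain_of_notMem_range fun ⟨n, hn⟩ => hrange ⟨n, hn⟩

lemma contK_add_two (iₘ i₀ : F[X]) (a : ℕ → F[X]) (b : ℕ → F) (n : ℕ) :
    contK iₘ i₀ a b (n + 2) =
      a (n + 1) * contK iₘ i₀ a b (n + 1) + C (b (n + 1)) * contK iₘ i₀ a b n :=
  rfl

lemma contK_add (iₘ i₀ : F[X]) (a : ℕ → F[X]) (b : ℕ → F) (m n : ℕ) :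
    contK iₘ i₀ a b (m + n + 1) =
      contK 0 1 (fun j => a (m + j)) (fun j => b (m + j)) (n + 1) * contK iₘ i₀ a b (m + 1) +
        contK 1 0 (fun j => a (m + j)) (fun j => b (m + j)) (n + 1) * contK iₘ i₀ a b m := by
  induction n using Nat.twoStepInduction with
  | zero => simp [contK]
  | one => simp [contK]
  | more n ih₀ ih₁ =>
    rw [show m + (n + 2) + 1 = m + n + 1 + 2 by ring, contK_add_two,
      show m + n + 1 + 1 = m + (n + 1) + 1 by ring, ih₁, ih₀,
      show n + 2 + 1 = n + 1 + 2 from rfl, contK_add_two 0 1 _ _ (n + 1),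
      contK_add_two 1 0 _ _ (n + 1)]
    ring_nf

lemma cfPab_eq_contK (α β : ℕ → F) : cfPab α β = contK 1 0 (fun j => X + C (α j)) β := by
  funext n
  induction n using Nat.twoStepInduction with
  | zero => rfl
  | one => rfl
  | more n ih₀ ih₁ => rw [cfPab, contK, ih₀, ih₁]

lemma cfQab_eq_contK (α β : ℕ → F) : cfQab α β = contK 0 1 (fun j => X + C (α j)) β := by
  funext n
  induction n using Nat.twoStepInduction with
  | zero => rfl
  | one => rfl
  | more n ih₀ ih₁ => rw [cfQab, contK, ih₀, ih₁]

lemma contK_one_zero_eq_C_mul (a : ℕ → F[X]) (b : ℕ → F) (n : ℕ) :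
    contK 1 0 a b (n + 2) =
      C (b 1) * contK 0 1 (fun j => a (j + 1)) (fun j => b (j + 1)) (n + 1) := by
  have h := contK_add 1 0 a b 1 n
  have h₂ : contK 1 0 a b 2 = C (b 1) := by simp [contK]
  rw [show 1 + n + 1 = n + 2 by ring, h₂, show contK (1 : F[X]) 0 a b 1 = 0 from rfl,
    mul_zero, add_zero, mul_comm] at h
  simpa only [add_comm 1] using h

lemma contK_zero_one_monic_natDegree (α : ℕ → F) (b : ℕ → F) (n : ℕ) :
    (contK 0 1 (fun j => X + C (α j)) b (n + 1)).Monic ∧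
      (contK 0 1 (fun j => X + C (α j)) b (n + 1)).natDegree = n := by
  induction n using Nat.twoStepInduction with
  | zero => simp [contK]
  | one => simp [contK, monic_X_add_C]
  | more n ih₀ ih₁ =>
    obtain ⟨hmonic, hdeg⟩ := ih₁
    have hlead : ((X + C (α (n + 2))) * contK 0 1 (fun j => X + C (α j)) b (n + 2)).Monic ∧
        ((X + C (α (n + 2))) * contK 0 1 (fun j => X + C (α j)) b (n + 2)).natDegree = n + 2 := by
      refine ⟨(monic_X_add_C _).mul hmonic, ?_⟩
      rw [(monic_X_add_C _).natDegree_mul hmonic, hdeg, natDegree_X_add_C, add_comm]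
    have hlow : (C (b (n + 2)) * contK 0 1 (fun j => X + C (α j)) b (n + 1)).degree <
        ((X + C (α (n + 2))) * contK 0 1 (fun j => X + C (α j)) b (n + 2)).degree :=
      degree_lt_degree ((natDegree_C_mul_le _ _).trans_lt (by rw [ih₀.2, hlead.2]; omega))
    rw [contK_add_two]
    exact ⟨hlead.1.add_of_left hlow, (natDegree_add_eq_left_of_degree_lt hlow).trans hlead.2⟩

lemma isUnit_contK_det (a : ℕ → F[X]) (b : ℕ → F) (hb : ∀ n, 1 ≤ n → b n ≠ 0)
    (n : ℕ) :
    IsUnit (contK 1 0 a b (n + 1) * contK 0 1 a b n - contK 1 0 a b n * contK 0 1 a b (n + 1)) := by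
  induction n with
  | zero => simp [contK]
  | succ n ih =>
    have hstep : contK 1 0 a b (n + 2) * contK 0 1 a b (n + 1) -
        contK 1 0 a b (n + 1) * contK 0 1 a b (n + 2) =
        -C (b (n + 1)) * (contK 1 0 a b (n + 1) * contK 0 1 a b n -
          contK 1 0 a b n * contK 0 1 a b (n + 1)) := by
      rw [contK_add_two, contK_add_two]
      ring
    rw [hstep]
    exact (isUnit_C.2 (hb _ n.succ_pos).isUnit).neg.mul ih

lemma isCoprime_of_isUnit_mul_sub_mul {R : Type*} [CommRing R] {p q r s : R}
    (h : IsUnit (p * s - q * r)) : IsCoprime p q := by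
  obtain ⟨u, hu⟩ := h.exists_left_inv
  exact ⟨u * s, -(u * r), by linear_combination hu⟩

lemma cfQab_monic_natDegree (α β : ℕ → F) (n : ℕ) :
    (cfQab α β (n + 1)).Monic ∧ (cfQab α β (n + 1)).natDegree = n := by
  rw [cfQab_eq_contK]
  exact contK_zero_one_monic_natDegree α β n

lemma isCoprime_cfPab_cfQab (α β : ℕ → F) (hβ : ∀ n, 1 ≤ n → β n ≠ 0) (n : ℕ) :
    IsCoprime (cfPab α β (n + 1)) (cfQab α β (n + 1)) := by
  have h := isUnit_contK_det (fun j => X + C (α j)) β hβ n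
  rw [← cfPab_eq_contK, ← cfQab_eq_contK, mul_comm (cfPab α β n)] at h
  exact isCoprime_of_isUnit_mul_sub_mul h

lemma isCoprime_cfPab_succ_cfPab (α β : ℕ → F) (hβ : ∀ n, 1 ≤ n → β n ≠ 0)
    (n : ℕ) :
    IsCoprime (cfPab α β (n + 1)) (cfPab α β n) := by
  have h := isUnit_contK_det (fun j => X + C (α j)) β hβ n
  rw [← cfPab_eq_contK, ← cfQab_eq_contK] at h
  exact isCoprime_of_isUnit_mul_sub_mul h

lemma degB_mul_sub_le_of_degB_sub_div_le {g : LaurentSeries F} {p q : F[X]} (hq : q ≠ 0)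
    {c : ℤ} (h : degB (g - pev p / pev q) ≤ (c : WithBot ℤ)) :
    degB (pev q * g - pev p) ≤ ((q.natDegree + c : ℤ) : WithBot ℤ) := by
  have hfactor : pev q * g - pev p = pev q * (g - pev p / pev q) := by
    field_simp [pev_ne_zero hq]
  rw [hfactor]
  exact degB_mul_le (degB_pev_le q) h

/-- `p q' - p' q = q (q' g - p') - q' (q g - p)` is a polynomial of negative degree. -/
lemma mul_eq_mul_of_degB_mul_sub_le {g : LaurentSeries F} {p q p' q' : F[X]} {n : ℕ}
    (hq : q.natDegree ≤ n) (hq' : q'.natDegree ≤ n)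
    (h : degB (pev q * g - pev p) ≤ ((-(n : ℤ) - 1 : ℤ) : WithBot ℤ))
    (h' : degB (pev q' * g - pev p') ≤ ((-(n : ℤ) - 1 : ℤ) : WithBot ℤ)) :
    p * q' = p' * q := by
  have hq_le (r : F[X]) (hr : r.natDegree ≤ n) : degB (pev r) ≤ ((n : ℤ) : WithBot ℤ) :=
    (degB_pev_le r).trans (by exact_mod_cast hr)
  have hcross : pev (p * q' - p' * q) =
      pev q * (pev q' * g - pev p') - pev q' * (pev q * g - pev p) := by
    rw [pev_sub, pev_mul, pev_mul]
    ring
  have hneg : degB (pev (p * q' - p' * q)) ≤ ((-1 : ℤ) : WithBot ℤ) := by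
    rw [hcross, show (-1 : ℤ) = n + (-(n : ℤ) - 1) by ring]
    exact degB_sub_le (degB_mul_le (hq_le q hq) h') (degB_mul_le (hq_le q' hq') h)
  exact sub_eq_zero.1 (eq_zero_of_degB_pev_le_neg_one hneg)

lemma degB_cfQab_mul_sub_cfPab_le {g : LaurentSeries F} {α β : ℕ → F} (n : ℕ)
    (hconv : degB (g - pev (cfPab α β (n + 1)) / pev (cfQab α β (n + 1))) ≤
      (((-(2 * (n : ℤ) + 1)) : ℤ) : WithBot ℤ)) :
    degB (pev (cfQab α β (n + 1)) * g - pev (cfPab α β (n + 1))) ≤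
      ((-(n : ℤ) - 1 : ℤ) : WithBot ℤ) := by
  obtain ⟨hmonic, hdeg⟩ := cfQab_monic_natDegree α β n
  convert degB_mul_sub_le_of_degB_sub_div_le hmonic.ne_zero hconv using 3
  rw [hdeg]
  ring

lemma degB_comp_X_pow_mul_sub_le {g : LaurentSeries F} {d : ℕ} (hd : 0 < d) {Pstar : F[X]}
    (hPdeg : Pstar.natDegree = d - 1) (hfe : pev Pstar * lsubst d g = g) {p q : F[X]} {n : ℕ}
    (h : degB (pev q * g - pev p) ≤ ((-(n : ℤ) - 1 : ℤ) : WithBot ℤ)) :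
    degB (pev (q.comp (X ^ d)) * g - pev (Pstar * p.comp (X ^ d))) ≤
      ((-((d * n : ℕ) : ℤ) - 1 : ℤ) : WithBot ℤ) := by
  have hsubst : pev (q.comp (X ^ d)) * g - pev (Pstar * p.comp (X ^ d)) =
      pev Pstar * lsubst d (pev q * g - pev p) := by
    conv_lhs => rw [← hfe]
    rw [lsubst_eq_lsubstRingHom hd, lsubst_eq_lsubstRingHom hd, map_sub, map_mul,
      lsubstRingHom_pev, lsubstRingHom_pev, pev_mul]
    ring
  have hP : degB (pev Pstar) ≤ (((d : ℤ) - 1 : ℤ) : WithBot ℤ) :=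
    (degB_pev_le Pstar).trans
      (by rw [hPdeg]; exact_mod_cast (by omega : ((d - 1 : ℕ) : ℤ) ≤ d - 1))
  rw [hsubst]
  convert degB_mul_le hP (degB_lsubst_le hd h) using 3
  push_cast
  ring

lemma eq_of_mul_eq_mul_of_isCoprime {p q p' q' : F[X]} (h : p * q' = p' * q)
    (hcop : IsCoprime p q) (hq : q.Monic) (hq' : q'.Monic) (hdeg : q'.natDegree ≤ q.natDegree) :
    p' = p := by
  have hqq' : q' = q := eq_of_monic_of_dvd_of_natDegree_le hq hq'
    (hcop.symm.dvd_of_dvd_mul_left ⟨p', h.trans (mul_comm _ _)⟩) hdeg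
  rw [hqq'] at h
  exact (mul_right_cancel₀ hq.ne_zero h).symm

lemma cfPab_mul_add_one_eq_mul_comp_X_pow {g : LaurentSeries F} {d : ℕ} (hd : 0 < d)
    {Pstar : F[X]} (hPdeg : Pstar.natDegree = d - 1) (hfe : pev Pstar * lsubst d g = g)
    {α β : ℕ → F} (hβ : ∀ n, 1 ≤ n → β n ≠ 0)
    (hconv : ∀ n : ℕ, degB (g - pev (cfPab α β (n + 1)) / pev (cfQab α β (n + 1))) ≤
      (((-(2 * (n : ℤ) + 1)) : ℤ) : WithBot ℤ)) (k : ℕ) :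
    cfPab α β (d * k + 1) = Pstar * (cfPab α β (k + 1)).comp (X ^ d) := by
  obtain ⟨hmonic, hdeg⟩ := cfQab_monic_natDegree α β (d * k)
  obtain ⟨hmonicₖ, hdegₖ⟩ := cfQab_monic_natDegree α β k
  have hdeg_comp : ((cfQab α β (k + 1)).comp (X ^ d)).natDegree = d * k := by
    rw [natDegree_comp, hdegₖ, natDegree_X_pow, mul_comm]
  have hcross := mul_eq_mul_of_degB_mul_sub_le hdeg.le hdeg_comp.le
    (degB_cfQab_mul_sub_cfPab_le (d * k) (hconv (d * k)))
    (degB_comp_X_pow_mul_sub_le hd hPdeg hfe (degB_cfQab_mul_sub_cfPab_le k (hconv k)))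
  exact (eq_of_mul_eq_mul_of_isCoprime hcross (isCoprime_cfPab_cfQab α β hβ (d * k)) hmonic
    (hmonicₖ.comp (monic_X_pow d) (by rw [natDegree_X_pow]; omega))
    (by rw [hdeg, hdeg_comp])).symm

/-- Let `g ∈ F((x⁻¹))` satisfy `P*(x) g(x^d) = g(x)` with `P*` monic
of degree `d-1`, `d ≥ 2`, and suppose `g` is badly approximable with all partial
quotients linear: `g = K_{i≥1} β_i/(x + α_i)` (so the `n`-th convergent approximates `g`
to order `< -2n`).  Then for every `k ≥ 0`,
`K¹_d(a_{dk+1},…,a_{d(k+1)}; β_{dk+1},…,β_{d(k+1)}) = β_{dk+1} P*(x)`,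
where `a_i(x) = x + α_i`. -/
theorem continuant_identity_badly_approximable (d : ℕ) (hd : 2 ≤ d)
    (Pstar : Polynomial F) (hmonic : Pstar.Monic) (hPdeg : Pstar.natDegree = d - 1)
    (g : LaurentSeries F) (hfe : pev Pstar * lsubst d g = g)
    (α β : ℕ → F) (hβ : ∀ n, 1 ≤ n → β n ≠ 0)
    (hconv : ∀ n : ℕ,
      degB (g - pev (cfPab α β (n + 1)) / pev (cfQab α β (n + 1))) ≤
        (((-(2 * (n : ℤ) + 1)) : ℤ) : WithBot ℤ)) :
    ∀ k : ℕ,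
      contK 1 0 (fun j => Polynomial.X + Polynomial.C (α (d * k + j)))
          (fun j => β (d * k + j)) (d + 1) =
        Polynomial.C (β (d * k + 1)) * Pstar := by
  intro k
  have hstep := cfPab_mul_add_one_eq_mul_comp_X_pow (by omega) hPdeg hfe hβ hconv
  set Q := contK 0 1 (fun j => X + C (α (d * k + (j + 1)))) (fun j => β (d * k + (j + 1))) d
  have hd₁ : d - 1 + 1 = d := by omega
  obtain ⟨hQmonic, hQdeg⟩ : Q.Monic ∧ Q.natDegree = d - 1 := by
    simpa only [hd₁] using contK_zero_one_monic_natDegree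
      (fun j => α (d * k + (j + 1))) (fun j => β (d * k + (j + 1))) (d - 1)
  have hK : contK 1 0 (fun j => X + C (α (d * k + j))) (fun j => β (d * k + j)) (d + 1) =
      C (β (d * k + 1)) * Q := by
    rw [show d + 1 = d - 1 + 2 by omega, contK_one_zero_eq_C_mul, hd₁]
  have hsplit := contK_add 1 0 (fun j => X + C (α j)) β (d * k) d
  rw [← cfPab_eq_contK, show d * k + d + 1 = d * (k + 1) + 1 by ring, hstep (k + 1), hstep k,
    hK] at hsplit
  have hdvd : Pstar ∣ C (β (d * k + 1)) * Q * cfPab α β (d * k) := by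
    rw [eq_sub_of_add_eq' hsplit.symm]
    exact dvd_sub (dvd_mul_right _ _) (dvd_mul_of_dvd_right (dvd_mul_right _ _) _)
  have hcop : IsCoprime Pstar (cfPab α β (d * k)) :=
    (isCoprime_cfPab_succ_cfPab α β hβ (d * k)).of_isCoprime_of_dvd_left ⟨_, hstep k⟩
  have hPQ : Q = Pstar := eq_of_monic_of_dvd_of_natDegree_le hmonic hQmonic
    ((isUnit_C.2 (hβ _ (by omega)).isUnit).dvd_mul_left.1 (hcop.dvd_of_dvd_mul_right hdvd))
    (by rw [hQdeg, hPdeg])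
  rw [hK, hPQ]

end
end
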